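/- Let f = x²z + y³ + xyw ∈ ℂ[x,y,z,w]. Then there exist polynomials P, Q, R, S, T, U ∈ ℂ[x,y,z,w] such that f = (2xz + yw)(∂S/∂w − ∂T/∂z + ∂U/∂y) + (3y² + xw)(−∂Q/∂w + ∂R/∂z − ∂U/∂x) + x²(∂P/∂w − ∂R/∂y + ∂T/∂x) + xy(∂P/∂z − ∂Q/∂y − ∂S/∂x). In other words, the class of ω = dx∧dy∧dz∧dw in the Brieskorn module B(f) is a torsion element annihilated by t, i.e. of torsion order 1. -/

import Mathlib

/-!
Since `f` is homogeneous of degree 3, Euler's identity gives `3 f = Σ xᵢ ∂f/∂xᵢ`, and the right-hand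
side is `df ∧ dη` for `η = w (z dx∧dy − y dx∧dz + x dy∧dz)`: the `w`-derivative of `η` recovers
`x f_x + y f_y + z f_z`, and its `x, y, z`-derivatives combine to `w f_w`.
-/

open MvPolynomial

namespace MvPolynomial

variable {A : Type*} [CommRing A]

/-- The coefficient of `df ∧ dη` on `dx∧dy∧dz∧dw`, where
`η = P dx∧dy + Q dx∧dz + R dx∧dw + S dy∧dz + T dy∧dw + U dz∧dw`. -/
noncomputable def dfWedgeD (f P Q R S T U : MvPolynomial (Fin 4) A) : MvPolynomial (Fin 4) A :=
  pderiv 0 f * (pderiv 3 S - pderiv 2 T + pderiv 1 U) +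
    pderiv 1 f * (-(pderiv 3 Q) + pderiv 2 R - pderiv 0 U) +
    pderiv 2 f * (pderiv 3 P - pderiv 1 R + pderiv 0 T) +
    pderiv 3 f * (pderiv 2 P - pderiv 1 Q - pderiv 0 S)

theorem dfWedgeD_eq_C_mul_sum_X_mul_pderiv (f : MvPolynomial (Fin 4) A) (a : A) :
    dfWedgeD f (C a * (X 2 * X 3)) (-(C a * (X 1 * X 3))) 0 (C a * (X 0 * X 3)) 0 0 =
      C a * ∑ i, X i * pderiv i f := by
  simp [dfWedgeD, Fin.sum_univ_four, pderiv_X]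
  ring

theorem IsHomogeneous.exists_eq_dfWedgeD {K : Type*} [Field K] {f : MvPolynomial (Fin 4) K}
    {n : ℕ} (hf : f.IsHomogeneous n) (hn : (n : K) ≠ 0) :
    ∃ P Q R S T U, f = dfWedgeD f P Q R S T U := by
  refine ⟨_, _, _, _, _, _, ((dfWedgeD_eq_C_mul_sum_X_mul_pderiv f (n : K)⁻¹).trans ?_).symm⟩
  rw [hf.sum_X_mul_pderiv, nsmul_eq_mul, ← mul_assoc, ← map_natCast C, ← map_mul,
    inv_mul_cancel₀ hn, map_one, one_mul]

end MvPolynomial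

/-- For `f = x²z + y³ + xyw ∈ ℂ[x,y,z,w]` (a cubic surface in `ℙ³` with
non-isolated singularities), the class of `ω = dx∧dy∧dz∧dw` in the Brieskorn module
`B(f)` is a torsion element annihilated by `t`: `f` lies in the image `E_f` of
`df ∧ d(Ω²)`, i.e. `f = f_x(S_w − T_z + U_y) + f_y(−Q_w + R_z − U_x) + f_z(P_w − R_y + T_x)
+ f_w(P_z − Q_y − S_x)` for suitable `P,Q,R,S,T,U`, where `f_x = 2xz + yw`,
`f_y = 3y² + xw`, `f_z = x²`, `f_w = xy`. -/
theorem statement17 :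
    ∃ P Q R S T U : MvPolynomial (Fin 4) ℂ,
      (X 0 ^ 2 * X 2 + X 1 ^ 3 + X 0 * X 1 * X 3 : MvPolynomial (Fin 4) ℂ) =
        (2 * (X 0 * X 2) + X 1 * X 3) * (pderiv 3 S - pderiv 2 T + pderiv 1 U) +
        (3 * X 1 ^ 2 + X 0 * X 3) * (-(pderiv 3 Q) + pderiv 2 R - pderiv 0 U) +
        X 0 ^ 2 * (pderiv 3 P - pderiv 1 R + pderiv 0 T) +
        X 0 * X 1 * (pderiv 2 P - pderiv 1 Q - pderiv 0 S) := by
  set f : MvPolynomial (Fin 4) ℂ := X 0 ^ 2 * X 2 + X 1 ^ 3 + X 0 * X 1 * X 3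
  have hf : f.IsHomogeneous 3 :=
    (((isHomogeneous_X_pow 0 2).mul (isHomogeneous_X ℂ 2)).add (isHomogeneous_X_pow 1 3)).add
      (((isHomogeneous_X ℂ 0).mul (isHomogeneous_X ℂ 1)).mul (isHomogeneous_X ℂ 3))
  obtain ⟨P, Q, R, S, T, U, hPQRSTU⟩ := hf.exists_eq_dfWedgeD (by norm_num)
  have hf₀ : pderiv 0 f = 2 * (X 0 * X 2) + X 1 * X 3 := by simp [f, pderiv_X]; ring
  have hf₁ : pderiv 1 f = 3 * X 1 ^ 2 + X 0 * X 3 := by simp [f, pderiv_X]; ring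
  have hf₂ : pderiv 2 f = X 0 ^ 2 := by simp [f, pderiv_X]
  have hf₃ : pderiv 3 f = X 0 * X 1 := by simp [f, pderiv_X]
  rw [dfWedgeD, hf₀, hf₁, hf₂, hf₃] at hPQRSTU
  exact ⟨P, Q, R, S, T, U, hPQRSTU⟩
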